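/- If G is a subcubic simple graph without isolated vertices satisfying ν_ac(G) < (n(G) − κ_G(K_{2,3}) − κ_G(K_4^+) − 2·κ_G(K_{3,3}))/4 and G has minimum order among all such graphs, then no vertex of degree 1 in G is adjacent to a vertex that does not lie on a cycle of G. -/

import Mathlib

open SimpleGraph

/-- `K4plus` is the graph obtained from `K_4` (on vertices 0,1,2,3) by subdividing
the edge between 0 and 1 once, using 4 as the subdivision vertex. -/
def K4plus : SimpleGraph (Fin 5) :=
  SimpleGraph.fromRel (fun a b =>
    (a, b) ∈ ([(0,2),(0,3),(1,2),(1,3),(2,3),(0,4),(1,4)] : List (Fin 5 × Fin 5)))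

/-- The complete bipartite graph `K_{2,3}`. -/
def K23 : SimpleGraph (Fin 2 ⊕ Fin 3) := completeBipartiteGraph (Fin 2) (Fin 3)

/-- The complete bipartite graph `K_{3,3}`. -/
def K33 : SimpleGraph (Fin 3 ⊕ Fin 3) := completeBipartiteGraph (Fin 3) (Fin 3)

/-- A matching `M` in `G` is acyclic if the subgraph of `G` induced by the set of
vertices incident to an edge of `M` is a forest. -/
def IsAcyclicMatching {V : Type*} (G : SimpleGraph V) (M : G.Subgraph) : Prop :=
  M.IsMatching ∧ (G.induce M.support).IsAcyclic

/-- The acyclic matching number of `G`: the maximum number of edges of an acyclic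
matching in `G`. -/
noncomputable def acyclicMatchingNumber {V : Type*} (G : SimpleGraph V) : ℕ :=
  sSup {k | ∃ M : G.Subgraph, IsAcyclicMatching G M ∧ M.edgeSet.ncard = k}

/-- `kappa G H` is the number of connected components of `G` whose induced subgraph
is isomorphic to `H`. -/
noncomputable def kappa {V W : Type*} (G : SimpleGraph V) (H : SimpleGraph W) : ℕ :=
  Nat.card {c : G.ConnectedComponent // Nonempty ((G.induce c.supp) ≃g H)}

/-- A graph is subcubic if every vertex has degree at most 3. -/
def Subcubic {V : Type*} (G : SimpleGraph V) : Prop :=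
  ∀ v, (G.neighborSet v).ncard ≤ 3

/-- A graph has no isolated vertices if every vertex has a neighbor. -/
def NoIsolatedVerts {V : Type*} (G : SimpleGraph V) : Prop :=
  ∀ v, ∃ w, G.Adj v w

/-- The lower bound `(n(G) - κ_G(K_{2,3}) - κ_G(K_4^+) - 2 κ_G(K_{3,3}))/4`. -/
noncomputable def acmBound {V : Type*} [Fintype V] (G : SimpleGraph V) : ℚ :=
  ((Fintype.card V : ℚ) - kappa G K23 - kappa G K4plus - 2 * kappa G K33) / 4

/-- `G` is a counterexample of minimum order to the bound
`ν_ac(G) ≥ (n(G) - κ_G(K_{2,3}) - κ_G(K_4^+) - 2 κ_G(K_{3,3}))/4`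
among subcubic graphs without isolated vertices. -/
def IsMinCounterexample {V : Type} [Fintype V] (G : SimpleGraph V) : Prop :=
  Subcubic G ∧ NoIsolatedVerts G ∧ (acyclicMatchingNumber G : ℚ) < acmBound G ∧
  ∀ (W : Type) [Fintype W] (H : SimpleGraph W),
    Subcubic H → NoIsolatedVerts H → (acyclicMatchingNumber H : ℚ) < acmBound H →
    Fintype.card V ≤ Fintype.card W

/-!
Suppose a pendant vertex `u` hangs on a vertex `v` that lies on no cycle. Delete `v`, its pendant
neighbours, and the components of `G - v` that are attached to `v` and isomorphic to `K_{2,3}`,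
`K_4^+` or `K_{3,3}`. Such a component contains a neighbour of `v`, so by subcubicity it is not
`K_{3,3}`; as `v` has at most three neighbours, at most `4 + 4k` vertices are deleted, `k` being
the number of deleted components. The remaining graph `G'` is smaller, subcubic and without
isolated vertices, and each of its exceptional components is a component of `G`, so minimality
gives `ν_ac(G') ≥ (n(G') - κ)/4` with `κ` the correction term of `G`. A maximum acyclic matching
of `G'`, the edge `uv` and one edge inside each deleted component form an acyclic matching of
`G`: a cycle avoids `v`, hence stays in one component of `G - v`, and meets the matching there
in at most two vertices or inside `G'`. Thus `ν_ac(G) ≥ ν_ac(G') + k + 1 ≥ (n(G) - κ)/4`.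
-/

namespace SimpleGraph

variable {V : Type*} {G : SimpleGraph V}

theorem isAcyclic_induce_iff {s : Set V} :
    (G.induce s).IsAcyclic ↔ ∀ ⦃w : V⦄ (c : G.Walk w w), c.IsCycle → ¬ ∀ z ∈ c.support, z ∈ s := by
  have hinj : Function.Injective (Embedding.induce (G := G) s).toHom := Subtype.val_injective
  refine ⟨fun h w c hc hs => h (c.induce s hs) ?_, fun h w c hc => h _ (hc.map hinj) ?_⟩
  · rwa [← Walk.isCycle_map_iff_of_injective hinj, Walk.map_induce]
  · rw [Walk.support_map]
    rintro _ hz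
    obtain ⟨x, -, rfl⟩ := List.mem_map.mp hz
    exact x.2

theorem IsAcyclic.induce_of_subset {s t : Set V} (h : (G.induce t).IsAcyclic) (hst : s ⊆ t) :
    (G.induce s).IsAcyclic :=
  isAcyclic_induce_iff.mpr fun _ c hc hs =>
    isAcyclic_induce_iff.mp h c hc fun z hz => hst (hs z hz)

theorem isAcyclic_induce_of_ncard_le_two [Finite V] {s : Set V} (h : s.ncard ≤ 2) :
    (G.induce s).IsAcyclic :=
  IsAcyclic.of_card_le_two <| by
    rw [ENat.card_eq_coe_natCard, Nat.card_coe_set_eq]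
    exact_mod_cast h

noncomputable def induceInduceIso (t : Set V) (s : Set t) :
    (G.induce t).induce s ≃g G.induce (Subtype.val '' s) where
  toEquiv := Equiv.Set.image Subtype.val s Subtype.val_injective
  map_rel_iff' := .rfl

theorem Walk.support_subset_of_adj_mem {s : Set V} (hs : ∀ a ∈ s, ∀ b, G.Adj a b → b ∈ s) :
    ∀ {a b : V} (p : G.Walk a b), a ∈ s → ∀ z ∈ p.support, z ∈ s
  | _, _, .nil, ha, z, hz => by
    rw [Walk.support_nil, List.mem_singleton] at hz
    exact hz ▸ ha
  | _, _, .cons hadj p, ha, z, hz => by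
    rw [Walk.support_cons, List.mem_cons] at hz
    rcases hz with rfl | hz
    · exact ha
    · exact p.support_subset_of_adj_mem hs (hs _ ha _ hadj) z hz

theorem ncard_neighborSet_lt_of_embedding [Finite V] {W : Type*} {H : SimpleGraph W}
    (e : H ↪g G) (z : W) {v : V} (hv : v ∉ Set.range e) (hadj : G.Adj (e z) v) :
    (H.neighborSet z).ncard < (G.neighborSet (e z)).ncard := by
  have hsub : insert v (e '' H.neighborSet z) ⊆ G.neighborSet (e z) := by
    rintro _ (rfl | ⟨y, hy, rfl⟩)
    · exact hadj
    · exact e.map_adj_iff.mpr hy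
  have hv' : v ∉ e '' H.neighborSet z := fun h => hv (Set.image_subset_range _ _ h)
  calc (H.neighborSet z).ncard = (e '' H.neighborSet z).ncard :=
        (Set.ncard_image_of_injective _ e.injective).symm
    _ < (insert v (e '' H.neighborSet z)).ncard := by
        rw [Set.ncard_insert_of_notMem hv']; exact Nat.lt_succ_self _
    _ ≤ (G.neighborSet (e z)).ncard := Set.ncard_le_ncard hsub

theorem _root_.Subcubic.of_embedding [Finite V] {W : Type*} {H : SimpleGraph W} (e : H ↪g G)
    (hG : Subcubic G) : Subcubic H := fun z =>
  calc (H.neighborSet z).ncard = (e '' H.neighborSet z).ncard :=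
        (Set.ncard_image_of_injective _ e.injective).symm
    _ ≤ (G.neighborSet (e z)).ncard :=
        Set.ncard_le_ncard (Set.image_subset_iff.mpr fun _ hy => e.map_adj_iff.mpr hy)
    _ ≤ 3 := hG _

def IsExceptional {W : Type*} (H : SimpleGraph W) : Prop :=
  Nonempty (H ≃g K23) ∨ Nonempty (H ≃g K4plus) ∨ Nonempty (H ≃g K33)

theorem IsExceptional.of_iso {W W' : Type*} {H : SimpleGraph W} {H' : SimpleGraph W'}
    (e : H ≃g H') (h : IsExceptional H') : IsExceptional H := by
  rcases h with ⟨⟨f⟩⟩ | ⟨⟨f⟩⟩ | ⟨⟨f⟩⟩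
  exacts [Or.inl ⟨e.trans f⟩, Or.inr (Or.inl ⟨e.trans f⟩), Or.inr (Or.inr ⟨e.trans f⟩)]

theorem IsExceptional.exists_adj {W : Type*} {H : SimpleGraph W} (h : IsExceptional H) :
    ∃ a b, H.Adj a b := by
  rcases h with ⟨⟨f⟩⟩ | ⟨⟨f⟩⟩ | ⟨⟨f⟩⟩
  · exact ⟨f.symm (.inl 0), f.symm (.inr 0), f.symm.map_adj_iff.mpr (by simp [K23])⟩
  · exact ⟨f.symm 0, f.symm 2, f.symm.map_adj_iff.mpr (by simp [K4plus])⟩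
  · exact ⟨f.symm (.inl 0), f.symm (.inr 0), f.symm.map_adj_iff.mpr (by simp [K33])⟩

theorem IsExceptional.natCard {W : Type*} {H : SimpleGraph W} (h : IsExceptional H) :
    Nat.card W = 5 ∨ Nat.card W = 6 := by
  rcases h with ⟨⟨f⟩⟩ | ⟨⟨f⟩⟩ | ⟨⟨f⟩⟩ <;> rw [Nat.card_congr f.toEquiv] <;> simp

theorem ncard_neighborSet_K33 (z : Fin 3 ⊕ Fin 3) : (K33.neighborSet z).ncard = 3 := by
  have : K33.neighborSet z = Set.range (z.elim (fun _ => Sum.inr) (fun _ => Sum.inl)) := by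
    ext w
    cases z <;> cases w <;> simp [K33]
  rw [this, Set.ncard_range_of_injective]
  · simp
  · cases z <;> simp [Function.Injective]

/-- `K_{3,3}` is excluded because its vertices already have degree 3. -/
theorem natCard_eq_five_of_isExceptional_induce [Finite V] (hG : Subcubic G) {S : Set V}
    (hS : IsExceptional (G.induce S)) {y v : V} (hy : y ∈ S) (hv : v ∉ S) (hadj : G.Adj y v) :
    Nat.card S = 5 := by
  rcases hS with ⟨⟨f⟩⟩ | ⟨⟨f⟩⟩ | ⟨⟨f⟩⟩
  · rw [Nat.card_congr f.toEquiv]; simp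
  · rw [Nat.card_congr f.toEquiv]; simp
  · have hlt : 3 < (G.neighborSet y).ncard := by
      simpa [ncard_neighborSet_K33] using ncard_neighborSet_lt_of_embedding
        ((Embedding.induce S).comp f.symm.toEmbedding) (f ⟨y, hy⟩) (by simpa using hv)
        (by simpa using hadj)
    exact absurd (hG y) hlt.not_ge

end SimpleGraph

section AcyclicMatchingNumber

variable {V : Type*} {G : SimpleGraph V}

theorem isAcyclicMatching_bot : IsAcyclicMatching G ⊥ :=
  ⟨fun _ h => h.elim, SimpleGraph.isAcyclic_induce_iff.mpr fun _ c _ h => by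
    simpa [Subgraph.mem_support] using h _ c.start_mem_support⟩

variable [Finite V]

theorem bddAbove_acyclicMatching_ncard :
    BddAbove {k | ∃ M : G.Subgraph, IsAcyclicMatching G M ∧ M.edgeSet.ncard = k} :=
  ⟨(Set.univ : Set (Sym2 V)).ncard, by
    rintro _ ⟨M, -, rfl⟩
    exact Set.ncard_le_ncard (Set.subset_univ _)⟩

theorem IsAcyclicMatching.ncard_edgeSet_le {M : G.Subgraph} (h : IsAcyclicMatching G M) :
    M.edgeSet.ncard ≤ acyclicMatchingNumber G :=
  le_csSup bddAbove_acyclicMatching_ncard ⟨M, h, rfl⟩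

theorem exists_isAcyclicMatching_ncard_eq :
    ∃ M : G.Subgraph, IsAcyclicMatching G M ∧ M.edgeSet.ncard = acyclicMatchingNumber G :=
  Nat.sSup_mem ⟨0, (⟨⊥, isAcyclicMatching_bot, by simp⟩ :
    ∃ M : G.Subgraph, IsAcyclicMatching G M ∧ M.edgeSet.ncard = 0)⟩ bddAbove_acyclicMatching_ncard

end AcyclicMatchingNumber

namespace SimpleGraph

variable {V : Type*} {G : SimpleGraph V}

theorem Subgraph.disjoint_edgeSet_of_disjoint_verts {M N : G.Subgraph}
    (h : Disjoint M.verts N.verts) : Disjoint M.edgeSet N.edgeSet := by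
  refine Set.disjoint_left.mpr fun e hM hN => ?_
  induction e using Sym2.ind with
  | _ a b =>
    exact Set.disjoint_left.mp h (M.mem_verts_of_mem_edge hM (Sym2.mem_mk_left a b))
      (N.mem_verts_of_mem_edge hN (Sym2.mem_mk_left a b))

theorem exists_isMatching_of_pairwiseDisjoint {F : Set (Set V)} (hF : F.PairwiseDisjoint id)
    (hedge : ∀ S ∈ F, ∃ x ∈ S, ∃ y ∈ S, G.Adj x y) :
    ∃ M : G.Subgraph, M.IsMatching ∧ M.edgeSet.ncard = F.ncard ∧ M.verts ⊆ ⋃₀ F ∧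
      ∀ S ∈ F, ∃ a b, M.verts ∩ S ⊆ {a, b} := by
  choose x hx y hy hxy using hedge
  let e (S : F) : G.Subgraph := G.subgraphOfAdj (hxy S.1 S.2)
  have he : ∀ S : F, (e S).verts ⊆ S.1 := fun S => by
    simp [e, Set.insert_subset_iff, hx, hy]
  have hdisj : ∀ S T : F, S ≠ T → Disjoint (S : Set V) T := fun S T hST =>
    hF S.2 T.2 (Subtype.coe_injective.ne hST)
  have hverts : (⨆ S, e S).verts = ⋃ S, (e S).verts := Subgraph.verts_iSup
  refine ⟨⨆ S, e S, ?_, ?_, ?_, ?_⟩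
  · refine Subgraph.IsMatching.iSup (fun S => Subgraph.IsMatching.subgraphOfAdj _) ?_
    intro S T hST
    rw [(Subgraph.IsMatching.subgraphOfAdj _).support_eq_verts,
      (Subgraph.IsMatching.subgraphOfAdj _).support_eq_verts]
    exact (hdisj S T hST).mono (he S) (he T)
  · have hinj : Function.Injective fun S : F => s(x S.1 S.2, y S.1 S.2) := by
      intro S T hST
      by_contra hne
      have hmem : x S.1 S.2 ∈ (e T).verts := by
        simp only [e, subgraphOfAdj_verts]
        rcases Sym2.eq_iff.mp hST with ⟨h, -⟩ | ⟨h, -⟩ <;> simp [h]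
      exact Set.disjoint_left.mp (hdisj S T hne) (hx _ _) (he T hmem)
    rw [Subgraph.edgeSet_iSup]
    simp only [e, edgeSet_subgraphOfAdj, Set.iUnion_singleton_eq_range]
    rw [Set.ncard_range_of_injective hinj, Nat.card_coe_set_eq]
  · rw [hverts]
    exact Set.iUnion_subset fun S => (he S).trans (Set.subset_sUnion_of_mem S.2)
  · intro S hS
    refine ⟨x S hS, y S hS, ?_⟩
    rintro z ⟨hz, hzS⟩
    rw [hverts, Set.mem_iUnion] at hz
    obtain ⟨T, hzT⟩ := hz
    obtain rfl : T = ⟨S, hS⟩ := by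
      by_contra hne
      exact Set.disjoint_left.mp (hdisj T ⟨S, hS⟩ hne) (he T hzT) hzS
    simpa [e] using hzT

variable (G) in
/-- The vertex set of the connected component of `x` in `G - v` (empty when `x = v`). -/
def avoidClass (v x : V) : Set V := {y | ∃ p : G.Walk x y, v ∉ p.support}

variable {u v w x y z : V}

theorem ne_of_mem_avoidClass (h : y ∈ G.avoidClass v x) : x ≠ v ∧ y ≠ v := by
  obtain ⟨p, hp⟩ := h
  exact ⟨fun h => hp (h ▸ p.start_mem_support), fun h => hp (h ▸ p.end_mem_support)⟩

theorem mem_avoidClass_self (hx : x ≠ v) : x ∈ G.avoidClass v x :=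
  ⟨.nil, by simpa using hx.symm⟩

theorem mem_avoidClass_comm : y ∈ G.avoidClass v x ↔ x ∈ G.avoidClass v y :=
  ⟨fun ⟨p, hp⟩ => ⟨p.reverse, by simpa using hp⟩, fun ⟨p, hp⟩ => ⟨p.reverse, by simpa using hp⟩⟩

theorem avoidClass_eq_of_mem (h : y ∈ G.avoidClass v x) :
    G.avoidClass v y = G.avoidClass v x := by
  obtain ⟨p, hp⟩ := h
  ext z
  refine ⟨fun ⟨q, hq⟩ => ⟨p.append q, ?_⟩, fun ⟨q, hq⟩ => ⟨p.reverse.append q, ?_⟩⟩ <;>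
    simp [Walk.mem_support_append_iff, hp, hq]

theorem mem_avoidClass_of_adj (h : y ∈ G.avoidClass v x) (hadj : G.Adj y z) (hz : z ≠ v) :
    z ∈ G.avoidClass v x := by
  obtain ⟨p, hp⟩ := h
  exact ⟨p.concat hadj, by simp [Walk.support_concat, hp, hz.symm]⟩

theorem Walk.mem_avoidClass_of_mem_support (p : G.Walk x y) (hp : v ∉ p.support)
    (hz : z ∈ p.support) : z ∈ G.avoidClass v x := by
  classical
  exact ⟨p.takeUntil z hz, fun h => hp (p.support_takeUntil_subset_support hz h)⟩

theorem avoidClass_eq_singleton (hw : G.neighborSet w = {v}) : G.avoidClass v w = {w} := by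
  have hwv : w ≠ v := fun h => by simpa [h] using hw.symm.subset rfl
  refine Set.eq_singleton_iff_unique_mem.mpr ⟨mem_avoidClass_self hwv, ?_⟩
  rintro y ⟨_ | ⟨hadj, p⟩, hp⟩
  · rfl
  · obtain rfl : _ = v := hw.subset hadj
    exact absurd p.start_mem_support fun h => hp (by simp [h])

theorem avoidClass_eq_connectedComponent_supp (hx : x ≠ v)
    (hv : ∀ y ∈ G.avoidClass v x, ¬ G.Adj y v) :
    G.avoidClass v x = (G.connectedComponentMk x).supp := by
  ext y
  rw [ConnectedComponent.mem_supp_iff, ConnectedComponent.eq]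
  refine ⟨fun ⟨p, _⟩ => p.reverse.reachable, fun ⟨p⟩ => ?_⟩
  refine p.reverse.support_subset_of_adj_mem (s := G.avoidClass v x) ?_ (mem_avoidClass_self hx)
    y p.reverse.end_mem_support
  intro a ha b hab
  exact mem_avoidClass_of_adj ha hab fun h => hv a ha (h ▸ hab)

/-- A cycle avoiding `v` stays inside one class of `G - v`, so acyclicity may be checked
class by class. -/
theorem isAcyclic_induce_of_forall_avoidClass (hv : ∀ w (c : G.Walk w w), c.IsCycle → v ∉ c.support)
    {s : Set V} (h : ∀ x, (G.induce (s ∩ G.avoidClass v x)).IsAcyclic) :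
    (G.induce s).IsAcyclic :=
  isAcyclic_induce_iff.mpr fun w c hc hs => isAcyclic_induce_iff.mp (h w) c hc fun z hz =>
    ⟨hs z hz, c.mem_avoidClass_of_mem_support (hv w c hc) hz⟩

variable (G v)

def pendantNbrs : Set V := {w | G.neighborSet w = {v}}

def exceptionalNbrs : Set V := {y | G.Adj v y ∧ IsExceptional (G.induce (G.avoidClass v y))}

def exceptionalClasses : Set (Set V) := G.avoidClass v '' G.exceptionalNbrs v

def reductionSet : Set V := insert v (G.pendantNbrs v ∪ ⋃₀ G.exceptionalClasses v)

variable {G v}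

theorem mem_reductionSet_self : v ∈ G.reductionSet v := Set.mem_insert _ _

theorem avoidClass_subset_reductionSet (hy : y ∈ G.reductionSet v) :
    G.avoidClass v y ⊆ G.reductionSet v := by
  rcases hy with rfl | hy | ⟨_, ⟨s, hs, rfl⟩, hyS⟩
  · exact fun z hz => absurd rfl (ne_of_mem_avoidClass hz).1
  · rw [avoidClass_eq_singleton hy, Set.singleton_subset_iff]
    exact Or.inr (Or.inl hy)
  · rw [avoidClass_eq_of_mem hyS]
    exact fun z hz => Or.inr (Or.inr ⟨_, ⟨s, hs, rfl⟩, hz⟩)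

theorem avoidClass_subset_compl_reductionSet (hx : x ∉ G.reductionSet v) :
    G.avoidClass v x ⊆ (G.reductionSet v)ᶜ :=
  fun _ hy hyD => hx (avoidClass_subset_reductionSet hyD (mem_avoidClass_comm.mp hy))

theorem eq_of_adj_of_mem_reductionSet (hx : x ∉ G.reductionSet v) (hadj : G.Adj x w)
    (hw : w ∈ G.reductionSet v) : w = v := by
  by_contra hwv
  have hxv : x ≠ v := (ne_of_mem_of_not_mem mem_reductionSet_self hx).symm
  exact hx (avoidClass_subset_reductionSet hw
    (mem_avoidClass_of_adj (mem_avoidClass_self hwv) hadj.symm hxv))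

theorem noIsolatedVerts_induce_compl_reductionSet (hG : NoIsolatedVerts G) :
    NoIsolatedVerts (G.induce (G.reductionSet v)ᶜ) := by
  intro x
  by_contra! hx
  have hpendant : G.neighborSet x = {v} := by
    obtain ⟨w, hw⟩ := hG x
    refine Set.eq_singleton_iff_nonempty_unique_mem.mpr ⟨⟨w, hw⟩, fun z hz => ?_⟩
    by_cases hzD : z ∈ G.reductionSet v
    · exact eq_of_adj_of_mem_reductionSet x.2 hz hzD
    · exact absurd hz (hx ⟨z, hzD⟩)
  exact x.2 (Or.inr (Or.inl hpendant))

theorem pairwiseDisjoint_exceptionalClasses : (G.exceptionalClasses v).PairwiseDisjoint id := by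
  rintro _ ⟨a, -, rfl⟩ _ ⟨b, -, rfl⟩ hne
  exact Set.disjoint_left.mpr fun z hza hzb =>
    hne ((avoidClass_eq_of_mem hza).symm.trans (avoidClass_eq_of_mem hzb))

theorem natCard_of_mem_exceptionalClasses [Finite V] (hG : Subcubic G) {S : Set V}
    (hS : S ∈ G.exceptionalClasses v) : Nat.card S = 5 := by
  obtain ⟨y, ⟨hvy, hy⟩, rfl⟩ := hS
  exact natCard_eq_five_of_isExceptional_induce hG hy (mem_avoidClass_self hvy.ne')
    (fun h => (ne_of_mem_avoidClass h).2 rfl) hvy.symm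

theorem not_mem_exceptionalNbrs_of_mem_pendantNbrs (hw : w ∈ G.pendantNbrs v) :
    w ∉ G.exceptionalNbrs v := by
  rintro ⟨-, hexc⟩
  rw [avoidClass_eq_singleton hw] at hexc
  rcases hexc.natCard with h | h <;> simp at h

theorem ncard_pendantNbrs_add_ncard_exceptionalNbrs_le [Finite V] (hG : Subcubic G) :
    (G.pendantNbrs v).ncard + (G.exceptionalNbrs v).ncard ≤ 3 := by
  have hsub : G.pendantNbrs v ∪ G.exceptionalNbrs v ⊆ G.neighborSet v := by
    rintro w (hw | hw)
    · exact (G.mem_neighborSet _ _).mpr (hw.symm.subset rfl : G.Adj w v).symm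
    · exact hw.1
  have hdisj : Disjoint (G.pendantNbrs v) (G.exceptionalNbrs v) :=
    Set.disjoint_left.mpr fun _ => not_mem_exceptionalNbrs_of_mem_pendantNbrs
  rw [← Set.ncard_union_eq hdisj]
  exact (Set.ncard_le_ncard hsub).trans (hG v)

theorem ncard_reductionSet_le [Finite V] (hG : Subcubic G) :
    (G.reductionSet v).ncard ≤ 4 + 4 * (G.exceptionalClasses v).ncard := by
  classical
  set T := (Set.toFinite (G.exceptionalClasses v)).toFinset
  have hunion : (⋃₀ G.exceptionalClasses v).ncard ≤ 5 * (G.exceptionalClasses v).ncard := by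
    calc (⋃₀ G.exceptionalClasses v).ncard = (⋃ S ∈ T, S).ncard := by
          simp [T, Set.sUnion_eq_biUnion]
      _ ≤ ∑ S ∈ T, S.ncard := T.set_ncard_biUnion_le id
      _ = T.card * 5 := Finset.sum_const_nat fun S hS => by
        rw [← Nat.card_coe_set_eq, natCard_of_mem_exceptionalClasses hG (by simpa [T] using hS)]
      _ = 5 * (G.exceptionalClasses v).ncard := by
        rw [Set.ncard_eq_toFinset_card _ (Set.toFinite _), mul_comm]
  have hclasses : (G.exceptionalClasses v).ncard ≤ (G.exceptionalNbrs v).ncard :=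
    Set.ncard_image_le (Set.toFinite _)
  have hnbrs := ncard_pendantNbrs_add_ncard_exceptionalNbrs_le (v := v) hG
  calc (G.reductionSet v).ncard
      ≤ (G.pendantNbrs v ∪ ⋃₀ G.exceptionalClasses v).ncard + 1 := Set.ncard_insert_le _ _
    _ ≤ (G.pendantNbrs v).ncard + (⋃₀ G.exceptionalClasses v).ncard + 1 := by
        gcongr; exact Set.ncard_union_le _ _
    _ ≤ 4 + 4 * (G.exceptionalClasses v).ncard := by omega

theorem image_val_supp_eq_avoidClass (c : (G.induce (G.reductionSet v)ᶜ).ConnectedComponent)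
    {x : ↥(G.reductionSet v)ᶜ} (hx : x ∈ c.supp) :
    Subtype.val '' c.supp = G.avoidClass v x := by
  ext y
  constructor
  · rintro ⟨y, hy, rfl⟩
    obtain ⟨q⟩ := ConnectedComponent.exact (hx.trans hy.symm)
    have hq : v ∉ (q.map (Embedding.induce _).toHom).support := by
      rw [Walk.support_map]
      rintro hv
      obtain ⟨z, -, hz⟩ := List.mem_map.mp hv
      exact z.2 (by rw [show (z : V) = v from hz]; exact mem_reductionSet_self)
    exact ⟨_, hq⟩
  · rintro ⟨p, hp⟩
    have hsub : ∀ z ∈ p.support, z ∈ (G.reductionSet v)ᶜ := fun z hz =>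
      avoidClass_subset_compl_reductionSet x.2 (p.mem_avoidClass_of_mem_support hp hz)
    refine ⟨⟨y, hsub y p.end_mem_support⟩, ?_, rfl⟩
    exact (ConnectedComponent.sound (p.induce _ hsub).reachable).symm.trans hx

theorem supp_map_induce_compl_reductionSet
    {c : (G.induce (G.reductionSet v)ᶜ).ConnectedComponent}
    (hc : IsExceptional ((G.induce (G.reductionSet v)ᶜ).induce c.supp)) :
    (c.map (Embedding.induce _).toHom).supp = Subtype.val '' c.supp := by
  induction c using ConnectedComponent.ind with | h x => ?_
  have hxv : (x : V) ≠ v := (ne_of_mem_of_not_mem mem_reductionSet_self x.2).symm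
  have hS := image_val_supp_eq_avoidClass ((G.induce _).connectedComponentMk x) (x := x) rfl
  have hexc : IsExceptional (G.induce (G.avoidClass v x)) := by
    rw [← hS]
    exact hc.of_iso (induceInduceIso _ _).symm
  rw [ConnectedComponent.map_mk, hS]
  refine (avoidClass_eq_connectedComponent_supp hxv fun y hy hyv => x.2 ?_).symm
  rw [← avoidClass_eq_of_mem hy] at hexc
  exact Or.inr (Or.inr ⟨_, ⟨y, ⟨hyv.symm, hexc⟩, rfl⟩,
    mem_avoidClass_comm.mp hy⟩)

theorem kappa_induce_compl_reductionSet_le [Finite V] {W : Type*} {X : SimpleGraph W}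
    (hX : IsExceptional X) : kappa (G.induce (G.reductionSet v)ᶜ) X ≤ kappa G X := by
  have hsupp : ∀ c : {c : (G.induce (G.reductionSet v)ᶜ).ConnectedComponent //
      Nonempty ((G.induce (G.reductionSet v)ᶜ).induce c.supp ≃g X)},
      (c.1.map (Embedding.induce _).toHom).supp = Subtype.val '' c.1.supp := fun ⟨c, ⟨e⟩⟩ =>
    supp_map_induce_compl_reductionSet (hX.of_iso e)
  refine Nat.card_le_card_of_injective
    (fun c => ⟨c.1.map (Embedding.induce _).toHom, ?_⟩) fun c d hcd => ?_
  · obtain ⟨e⟩ := c.2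
    rw [hsupp c]
    exact ⟨(induceInduceIso _ _).symm.trans e⟩
  · have h := congrArg ConnectedComponent.supp (congrArg Subtype.val hcd)
    rw [hsupp c, hsupp d, (Set.image_injective.mpr Subtype.val_injective).eq_iff,
      ConnectedComponent.supp_inj] at h
    exact Subtype.ext h

theorem disjoint_pair_of_mem_exceptionalClasses (hu : u ∈ G.pendantNbrs v) {S : Set V}
    (hS : S ∈ G.exceptionalClasses v) : Disjoint {u, v} S := by
  obtain ⟨y, ⟨-, hexc⟩, rfl⟩ := hS
  rw [Set.disjoint_insert_left, Set.disjoint_singleton_left]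
  refine ⟨fun huS => ?_, fun hv => (ne_of_mem_avoidClass hv).2 rfl⟩
  rw [← avoidClass_eq_of_mem huS, avoidClass_eq_singleton hu] at hexc
  rcases hexc.natCard with h | h <;> simp at h

theorem exists_isMatching_reductionSet [Finite V] (hu : u ∈ G.pendantNbrs v) :
    ∃ M : G.Subgraph, M.IsMatching ∧ M.edgeSet.ncard = (G.exceptionalClasses v).ncard + 1 ∧
      M.verts ⊆ G.reductionSet v ∧
      ∀ x ∈ G.reductionSet v, (M.verts ∩ G.avoidClass v x).ncard ≤ 2 := by
  have huv : G.Adj u v := hu.symm.subset rfl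
  have hnotMem : {u, v} ∉ G.exceptionalClasses v := fun h =>
    Set.disjoint_left.mp (disjoint_pair_of_mem_exceptionalClasses hu h) (Set.mem_insert u _)
      (Set.mem_insert u _)
  have hdisj : (insert {u, v} (G.exceptionalClasses v)).PairwiseDisjoint id :=
    pairwiseDisjoint_exceptionalClasses.insert_of_notMem hnotMem fun _ hS =>
      disjoint_pair_of_mem_exceptionalClasses hu hS
  have hedge : ∀ S ∈ insert {u, v} (G.exceptionalClasses v), ∃ x ∈ S, ∃ y ∈ S, G.Adj x y := by
    rintro _ (rfl | ⟨y, ⟨-, hexc⟩, rfl⟩)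
    · exact ⟨u, by simp, v, by simp, huv⟩
    · obtain ⟨a, b, hab⟩ := hexc.exists_adj
      exact ⟨a, a.2, b, b.2, hab⟩
  obtain ⟨M, hM, hcard, hverts, hpair⟩ := exists_isMatching_of_pairwiseDisjoint hdisj hedge
  refine ⟨M, hM, by rw [hcard, Set.ncard_insert_of_notMem hnotMem], ?_, ?_⟩
  · refine hverts.trans (Set.sUnion_subset ?_)
    rintro _ (rfl | hS)
    · exact Set.insert_subset_iff.mpr ⟨Or.inr (Or.inl hu), by simp [Set.subset_def, reductionSet]⟩
    · exact fun z hz => Or.inr (Or.inr ⟨_, hS, hz⟩)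
  · intro x hx
    rcases hx with rfl | hx | ⟨_, ⟨y, hy, rfl⟩, hxS⟩
    · simp [Set.eq_empty_iff_forall_notMem.mpr fun z hz => (ne_of_mem_avoidClass hz).1 rfl]
    · rw [avoidClass_eq_singleton hx]
      exact (Set.ncard_le_ncard Set.inter_subset_right).trans (by simp)
    · obtain ⟨a, b, hab⟩ := hpair _ (Or.inr ⟨y, hy, rfl⟩)
      rw [avoidClass_eq_of_mem hxS]
      exact (Set.ncard_le_ncard hab).trans (Set.ncard_insert_le _ _ |>.trans (by simp))

theorem isAcyclic_induce_union_of_reductionSet [Finite V]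
    (hv : ∀ w (c : G.Walk w w), c.IsCycle → v ∉ c.support) {s t : Set V}
    (hs : (G.induce s).IsAcyclic) (hsD : s ⊆ (G.reductionSet v)ᶜ) (htD : t ⊆ G.reductionSet v)
    (ht : ∀ x ∈ G.reductionSet v, (t ∩ G.avoidClass v x).ncard ≤ 2) :
    (G.induce (s ∪ t)).IsAcyclic := by
  refine isAcyclic_induce_of_forall_avoidClass hv fun x => ?_
  by_cases hx : x ∈ G.reductionSet v
  · refine isAcyclic_induce_of_ncard_le_two ((Set.ncard_le_ncard ?_).trans (ht x hx))
    rintro z ⟨hz | hz, hzx⟩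
    · exact absurd (avoidClass_subset_reductionSet hx hzx) (hsD hz)
    · exact ⟨hz, hzx⟩
  · refine hs.induce_of_subset ?_
    rintro z ⟨hz | hz, hzx⟩
    · exact hz
    · exact absurd (htD hz) (avoidClass_subset_compl_reductionSet hx hzx)

theorem acyclicMatchingNumber_induce_compl_reductionSet_add_le [Finite V]
    (hv : ∀ w (c : G.Walk w w), c.IsCycle → v ∉ c.support) (hu : u ∈ G.pendantNbrs v) :
    acyclicMatchingNumber (G.induce (G.reductionSet v)ᶜ) + (G.exceptionalClasses v).ncard + 1 ≤
      acyclicMatchingNumber G := by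
  obtain ⟨M', ⟨hM'm, hM'a⟩, hM'card⟩ :=
    exists_isAcyclicMatching_ncard_eq (G := G.induce (G.reductionSet v)ᶜ)
  obtain ⟨M₂, hM₂m, hM₂card, hM₂D, hM₂pair⟩ := exists_isMatching_reductionSet hu
  set M₁ := M'.map (Embedding.induce (G.reductionSet v)ᶜ).toHom
  have hM₁m : M₁.IsMatching := hM'm.map _ Subtype.val_injective
  have hM₁D : M₁.verts ⊆ (G.reductionSet v)ᶜ := by
    rintro _ ⟨y, -, rfl⟩
    exact y.2
  have hdisj : Disjoint M₁.verts M₂.verts :=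
    (disjoint_compl_left.mono_right hM₂D).mono_left hM₁D
  have hM₁a : (G.induce M₁.verts).IsAcyclic := by
    rw [hM'm.support_eq_verts] at hM'a
    exact (induceInduceIso _ _).isAcyclic_iff.mp hM'a
  have hM₁card : M₁.edgeSet.ncard = M'.edgeSet.ncard := by
    rw [Subgraph.edgeSet_map]
    exact Set.ncard_image_of_injective _ (Sym2.map.injective Subtype.val_injective)
  have hMm : (M₁ ⊔ M₂).IsMatching :=
    hM₁m.sup hM₂m (by rwa [hM₁m.support_eq_verts, hM₂m.support_eq_verts])
  have hM : IsAcyclicMatching G (M₁ ⊔ M₂) := by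
    refine ⟨hMm, ?_⟩
    rw [hMm.support_eq_verts, Subgraph.verts_sup]
    exact isAcyclic_induce_union_of_reductionSet hv hM₁a hM₁D hM₂D hM₂pair
  have := hM.ncard_edgeSet_le
  rw [Subgraph.edgeSet_sup, Set.ncard_union_eq (Subgraph.disjoint_edgeSet_of_disjoint_verts hdisj),
    hM₁card, hM'card, hM₂card] at this
  omega

end SimpleGraph

theorem IsMinCounterexample.acmBound_le {V W : Type} [Fintype V] [Fintype W] {G : SimpleGraph V}
    (hG : IsMinCounterexample G) {H : SimpleGraph W} (hH : Subcubic H) (hH' : NoIsolatedVerts H)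
    (hcard : Fintype.card W < Fintype.card V) : acmBound H ≤ acyclicMatchingNumber H := by
  by_contra! h
  exact (hG.2.2.2 W H hH hH' h).not_gt hcard

/-- In a minimum-order counterexample, no vertex of degree 1 is adjacent to a
vertex that does not lie on a cycle: every neighbor of a degree-1 vertex lies on
a cycle. -/
theorem stmt_5 {V : Type} [Fintype V] (G : SimpleGraph V)
    (hmin : IsMinCounterexample G) :
    ∀ u v : V, (G.neighborSet u).ncard = 1 → G.Adj u v →
      ∃ (w : V) (c : G.Walk w w), c.IsCycle ∧ v ∈ c.support := by
  intro u v hdeg huv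
  by_contra! hv
  have hu : u ∈ G.pendantNbrs v := by
    obtain ⟨a, ha⟩ := Set.ncard_eq_one.mp hdeg
    rwa [← show v = a from ha.subset huv] at ha
  set D := G.reductionSet v
  let : Fintype ↥Dᶜ := Fintype.ofFinite _
  have hcard : Fintype.card ↥Dᶜ + D.ncard = Fintype.card V := by
    rw [Fintype.card_eq_nat_card, Nat.card_coe_set_eq, Fintype.card_eq_nat_card, add_comm]
    exact Set.ncard_add_ncard_compl D
  have hDpos : 0 < D.ncard := (Set.ncard_pos (Set.toFinite _)).mpr ⟨v, mem_reductionSet_self⟩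
  have hbound := hmin.acmBound_le (hmin.1.of_embedding (Embedding.induce Dᶜ))
    (noIsolatedVerts_induce_compl_reductionSet hmin.2.1) (by omega)
  have hmatch := acyclicMatchingNumber_induce_compl_reductionSet_add_le hv hu
  have hD := ncard_reductionSet_le (v := v) hmin.1
  have h23 := kappa_induce_compl_reductionSet_le (G := G) (v := v) (X := K23) (.inl ⟨.refl⟩)
  have h4 := kappa_induce_compl_reductionSet_le (G := G) (v := v) (X := K4plus)
    (.inr (.inl ⟨.refl⟩))
  have h33 := kappa_induce_compl_reductionSet_le (G := G) (v := v) (X := K33) (.inr (.inr ⟨.refl⟩))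
  have hlt := hmin.2.2.1
  unfold acmBound at hbound hlt
  qify at hcard hmatch hD h23 h4 h33
  linarith
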